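/- Let 𝕊 be a quantum system with policy ↝. Suppose that for each agent a ∈ A there is an equivalence relation ∼ₐ on reachable density operators satisfying: (step consistency) if ρ ∼ₐ σ then 𝓔_{b,c}(ρ) ∼ₐ 𝓔_{b,c}(σ) for all b ∈ A and c ∈ C; and (local respect of ↝) if ¬(b ↝ a) then ρ ∼ₐ 𝓔_{b,c}(ρ) for all c ∈ C and all reachable ρ. Then for every agent a ∈ A and every finite sequence α over A×C, 𝓔_α(ρ0) ∼ₐ 𝓔_{purge_{∇a}(α)}(ρ0). -/

import Mathlib

open scoped Classical ComplexOrder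
open Matrix Kronecker

noncomputable section

/-- A density operator: positive semidefinite with trace 1. -/
def IsDensity {d : Type} [Fintype d] [DecidableEq d] (ρ : Matrix d d ℂ) : Prop :=
  ρ.PosSemidef ∧ ρ.trace = 1

/-- A super-operator: a linear, positive, trace-preserving map on matrices. -/
def IsSuperOp {d : Type} [Fintype d] [DecidableEq d]
    (F : Matrix d d ℂ → Matrix d d ℂ) : Prop :=
  IsLinearMap ℂ F ∧ (∀ ρ : Matrix d d ℂ, ρ.PosSemidef → (F ρ).PosSemidef) ∧
    (∀ ρ : Matrix d d ℂ, (F ρ).trace = ρ.trace)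

/-- A finite family of matrices (the data of a measurement). -/
structure PMeas (d : Type) where
  m : ℕ
  E : Fin m → Matrix d d ℂ

/-- The family is a POVM: positive semidefinite elements summing to the identity. -/
def PMeas.IsPOVM {d : Type} [Fintype d] [DecidableEq d] (P : PMeas d) : Prop :=
  (∀ i, (P.E i).PosSemidef) ∧ ∑ i, P.E i = 1

/-- The distance between outcome distributions of a measurement on two states. -/
def dE {d : Type} [Fintype d] (P : PMeas d) (ρ σ : Matrix d d ℂ) : ℝ :=
  (1 / 2) * ∑ i, ‖(P.E i * ρ).trace - (P.E i * σ).trace‖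

/-- The measurement pseudo-distance induced by a set of measurements. -/
def dM {d : Type} [Fintype d] (M : Set (PMeas d)) (ρ σ : Matrix d d ℂ) : ℝ :=
  sSup { x | ∃ P ∈ M, x = dE P ρ σ }

/-- A quantum system: initial state, agents, commands, super-operators, measurements. -/
structure QSystem (Agent Cmd d : Type) where
  ρ0 : Matrix d d ℂ
  A : Set Agent
  C : Set Cmd
  Ecmd : Agent → Cmd → Matrix d d ℂ → Matrix d d ℂ
  M : Agent → Set (PMeas d)

/-- Well-formedness: the initial state is a density operator, commands act as
super-operators, and agents measure with POVMs. -/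
def QSystem.WellFormed {Agent Cmd d : Type} [Fintype d] [DecidableEq d]
    (S : QSystem Agent Cmd d) : Prop :=
  IsDensity S.ρ0 ∧ (∀ a ∈ S.A, ∀ c ∈ S.C, IsSuperOp (S.Ecmd a c)) ∧
    (∀ a ∈ S.A, ∀ P ∈ S.M a, P.IsPOVM)

/-- Execution of a finite action sequence (composition of super-operators, in order). -/
def QSystem.run {Agent Cmd d : Type} (S : QSystem Agent Cmd d)
    (α : List (Agent × Cmd)) (ρ : Matrix d d ℂ) : Matrix d d ℂ :=
  α.foldl (fun τ p => S.Ecmd p.1 p.2 τ) ρ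

/-- A sequence over A × C. -/
def QSystem.Valid {Agent Cmd d : Type} (S : QSystem Agent Cmd d)
    (α : List (Agent × Cmd)) : Prop :=
  ∀ p ∈ α, p.1 ∈ S.A ∧ p.2 ∈ S.C

/-- `purge G D α` deletes from `α` every pair `(a, c)` with `a ∈ G` and `c ∈ D`. -/
def purge {Agent Cmd : Type} (G : Set Agent) (D : Set Cmd) :
    List (Agent × Cmd) → List (Agent × Cmd)
  | [] => []
  | p :: rest => if p.1 ∈ G ∧ p.2 ∈ D then purge G D rest else p :: purge G D rest

/-- A reachable density operator. -/
def QSystem.Reachable {Agent Cmd d : Type} (S : QSystem Agent Cmd d)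
    (ρ : Matrix d d ℂ) : Prop :=
  ∃ α, S.Valid α ∧ S.run α S.ρ0 = ρ

/-- `∇ a`: the set of agents from which information may not flow to `a`. -/
def nabla {Agent : Type} (pol : Agent → Agent → Prop) (a : Agent) : Set Agent :=
  { b | ¬ pol b a }

/-- The security degree `K(𝕊,↝)`. -/
def Kdeg {Agent Cmd d : Type} [Fintype d] (S : QSystem Agent Cmd d)
    (pol : Agent → Agent → Prop) : ℝ :=
  sSup { x | ∃ a ∈ S.A, ∃ α, S.Valid α ∧
    x = dM (S.M a) (S.run α S.ρ0) (S.run (purge (nabla pol a) Set.univ α) S.ρ0) }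

/-- The `t`-bounded security degree `K_t(𝕊,↝)`. -/
def Kt {Agent Cmd d : Type} [Fintype d] (S : QSystem Agent Cmd d)
    (pol : Agent → Agent → Prop) (t : ℕ) : ℝ :=
  sSup { x | ∃ a ∈ S.A, ∃ α, S.Valid α ∧ α.length ≤ t ∧
    x = dM (S.M a) (S.run α S.ρ0) (S.run (purge (nabla pol a) Set.univ α) S.ρ0) }

/-- The interference degree `Int(G₁, D | G₂)`. -/
def IntDeg {Agent Cmd d : Type} [Fintype d] (S : QSystem Agent Cmd d)
    (G1 : Set Agent) (D : Set Cmd) (G2 : Set Agent) : ℝ :=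
  sSup { x | ∃ a ∈ G2, ∃ α, S.Valid α ∧
    x = dM (S.M a) (S.run α S.ρ0) (S.run (purge G1 D α) S.ρ0) }

/-- The positive semidefinite square root (as defined in the older Mathlib). -/
def Matrix.PosSemidef.sqrt {n : Type} [Fintype n] [DecidableEq n] {𝕜 : Type} [RCLike 𝕜]
    {A : Matrix n n 𝕜} (hA : A.PosSemidef) : Matrix n n 𝕜 :=
  hA.1.eigenvectorUnitary.1 * diagonal ((↑) ∘ (√·) ∘ hA.1.eigenvalues) *
  (star hA.1.eigenvectorUnitary : Matrix n n 𝕜)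

/-- Trace distance `d(ρ,σ) = (1/2)·tr √((ρ−σ)†(ρ−σ))`. -/
def traceDist {d : Type} [Fintype d] [DecidableEq d] (ρ σ : Matrix d d ℂ) : ℝ :=
  (1 / 2) * ((Matrix.posSemidef_conjTranspose_mul_self (ρ - σ)).sqrt.trace).re

end

/-!
Strengthen the claim to: if `σ ∼ₐ ρ` for reachable `σ` and `ρ`, then
`𝓔_{purge α}(σ) ∼ₐ 𝓔_α(ρ)`, by induction on `α` generalising both states. A step that survives
the purge is applied to both sides and handled by step consistency; a purged step `(b, c)` acts on
the right only, and `σ ∼ₐ ρ ∼ₐ 𝓔_{b,c}(ρ)` by local respect and transitivity. The theorem is the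
case `σ = ρ = ρ0`, read backwards through symmetry.
-/

theorem purge_sublist {Agent Cmd : Type} (G : Set Agent) (D : Set Cmd) :
    ∀ α : List (Agent × Cmd), (purge G D α).Sublist α
  | [] => .slnil
  | p :: α => by
    unfold purge
    split_ifs
    · exact (purge_sublist G D α).cons p
    · exact (purge_sublist G D α).cons_cons p

namespace QSystem

variable {Agent Cmd d : Type} (S : QSystem Agent Cmd d)

theorem run_cons (p : Agent × Cmd) (α : List (Agent × Cmd)) (ρ : Matrix d d ℂ) :
    S.run (p :: α) ρ = S.run α (S.Ecmd p.1 p.2 ρ) := rfl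

theorem run_append (α β : List (Agent × Cmd)) (ρ : Matrix d d ℂ) :
    S.run (α ++ β) ρ = S.run β (S.run α ρ) :=
  List.foldl_append

variable {S}

theorem Valid.sublist {α β : List (Agent × Cmd)} (hβ : S.Valid β) (h : α.Sublist β) :
    S.Valid α :=
  fun p hp => hβ p (h.subset hp)

theorem Valid.append {α β : List (Agent × Cmd)} (hα : S.Valid α) (hβ : S.Valid β) :
    S.Valid (α ++ β) :=
  fun p hp => (List.mem_append.1 hp).elim (hα p) (hβ p)

theorem valid_cons {p : Agent × Cmd} {α : List (Agent × Cmd)} :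
    S.Valid (p :: α) ↔ (p.1 ∈ S.A ∧ p.2 ∈ S.C) ∧ S.Valid α :=
  List.forall_mem_cons

theorem reachable_ρ0 : S.Reachable S.ρ0 :=
  ⟨[], fun _ hp => absurd hp List.not_mem_nil, rfl⟩

theorem Reachable.run {ρ : Matrix d d ℂ} (hρ : S.Reachable ρ) {α : List (Agent × Cmd)}
    (hα : S.Valid α) : S.Reachable (S.run α ρ) := by
  obtain ⟨β, hβ, rfl⟩ := hρ
  exact ⟨β ++ α, hβ.append hα, S.run_append β α S.ρ0⟩

theorem Reachable.ecmd {ρ : Matrix d d ℂ} (hρ : S.Reachable ρ) {b : Agent} {c : Cmd}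
    (hb : b ∈ S.A) (hc : c ∈ S.C) : S.Reachable (S.Ecmd b c ρ) :=
  hρ.run (α := [(b, c)]) (valid_cons.2 ⟨⟨hb, hc⟩, fun _ hp => absurd hp List.not_mem_nil⟩)

theorem rel_run_purge_of_rel (G : Set Agent) (D : Set Cmd)
    (R : Matrix d d ℂ → Matrix d d ℂ → Prop)
    (htrans : ∀ ρ σ τ, S.Reachable ρ → S.Reachable σ → S.Reachable τ →
      R ρ σ → R σ τ → R ρ τ)
    (hstep : ∀ b ∈ S.A, ∀ c ∈ S.C, ∀ ρ σ, S.Reachable ρ → S.Reachable σ →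
      R ρ σ → R (S.Ecmd b c ρ) (S.Ecmd b c σ))
    (hlocal : ∀ b ∈ S.A, b ∈ G → ∀ c ∈ S.C, c ∈ D → ∀ ρ, S.Reachable ρ →
      R ρ (S.Ecmd b c ρ)) :
    ∀ α : List (Agent × Cmd), S.Valid α → ∀ σ ρ, S.Reachable σ → S.Reachable ρ →
      R σ ρ → R (S.run (purge G D α) σ) (S.run α ρ)
  | [], _, _, _, _, _, h => h
  | (b, c) :: α, hvalid, σ, ρ, hσ, hρ, h => by
    obtain ⟨⟨hb, hc⟩, hα⟩ := valid_cons.1 hvalid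
    have ih := rel_run_purge_of_rel G D R htrans hstep hlocal α hα
    have hEρ := hρ.ecmd hb hc
    rw [purge, run_cons]
    split_ifs with hpurged
    · exact ih σ _ hσ hEρ (htrans σ ρ _ hσ hρ hEρ h (hlocal b hb hpurged.1 c hc hpurged.2 ρ hρ))
    · exact ih _ _ (hσ.ecmd hb hc) hEρ (hstep b hb c hc σ ρ hσ hρ h)

end QSystem

theorem unwinding_relates_purged_general {Agent Cmd d : Type}
    (S : QSystem Agent Cmd d)
    (pol : Agent → Agent → Prop)
    (sim : Agent → Matrix d d ℂ → Matrix d d ℂ → Prop)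
    (hrefl : ∀ a ∈ S.A, ∀ ρ, S.Reachable ρ → sim a ρ ρ)
    (hsymm : ∀ a ∈ S.A, ∀ ρ σ, S.Reachable ρ → S.Reachable σ →
      sim a ρ σ → sim a σ ρ)
    (htrans : ∀ a ∈ S.A, ∀ ρ σ τ, S.Reachable ρ → S.Reachable σ → S.Reachable τ →
      sim a ρ σ → sim a σ τ → sim a ρ τ)
    (hstep : ∀ a ∈ S.A, ∀ b ∈ S.A, ∀ c ∈ S.C, ∀ ρ σ, S.Reachable ρ → S.Reachable σ →
      sim a ρ σ → sim a (S.Ecmd b c ρ) (S.Ecmd b c σ))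
    (hlocal : ∀ a ∈ S.A, ∀ b ∈ S.A, ¬ pol b a → ∀ c ∈ S.C, ∀ ρ, S.Reachable ρ →
      sim a ρ (S.Ecmd b c ρ)) :
    ∀ a ∈ S.A, ∀ α : List (Agent × Cmd), S.Valid α →
      sim a (S.run α S.ρ0) (S.run (purge (nabla pol a) Set.univ α) S.ρ0) := by
  intro a ha α hα
  have h0 : S.Reachable S.ρ0 := QSystem.reachable_ρ0
  have hpurged : sim a (S.run (purge (nabla pol a) Set.univ α) S.ρ0) (S.run α S.ρ0) :=
    QSystem.rel_run_purge_of_rel (nabla pol a) Set.univ (sim a) (htrans a ha) (hstep a ha)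
      (fun b hb hba c hc _ => hlocal a ha b hb hba c hc) α hα S.ρ0 S.ρ0 h0 h0
      (hrefl a ha S.ρ0 h0)
  exact hsymm a ha _ _ (h0.run (hα.sublist (purge_sublist _ _ α))) (h0.run hα) hpurged

/-- If each agent has an equivalence relation on reachable density operators which is
step consistent and locally respects the policy, then for every agent `a ∈ A` and every
finite sequence `α` over `A × C`, `𝓔_α(ρ0) ∼ₐ 𝓔_{purge_{∇a}(α)}(ρ0)`. -/
theorem unwinding_relates_purged {Agent Cmd d : Type} [Fintype d] [DecidableEq d] [Nonempty d]
    (S : QSystem Agent Cmd d) (hS : S.WellFormed)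
    (pol : Agent → Agent → Prop) (hpol : ∀ a ∈ S.A, pol a a)
    (sim : Agent → Matrix d d ℂ → Matrix d d ℂ → Prop)
    (hrefl : ∀ a ∈ S.A, ∀ ρ, S.Reachable ρ → sim a ρ ρ)
    (hsymm : ∀ a ∈ S.A, ∀ ρ σ, S.Reachable ρ → S.Reachable σ →
      sim a ρ σ → sim a σ ρ)
    (htrans : ∀ a ∈ S.A, ∀ ρ σ τ, S.Reachable ρ → S.Reachable σ → S.Reachable τ →
      sim a ρ σ → sim a σ τ → sim a ρ τ)
    (hstep : ∀ a ∈ S.A, ∀ b ∈ S.A, ∀ c ∈ S.C, ∀ ρ σ, S.Reachable ρ → S.Reachable σ →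
      sim a ρ σ → sim a (S.Ecmd b c ρ) (S.Ecmd b c σ))
    (hlocal : ∀ a ∈ S.A, ∀ b ∈ S.A, ¬ pol b a → ∀ c ∈ S.C, ∀ ρ, S.Reachable ρ →
      sim a ρ (S.Ecmd b c ρ)) :
    ∀ a ∈ S.A, ∀ α : List (Agent × Cmd), S.Valid α →
      sim a (S.run α S.ρ0) (S.run (purge (nabla pol a) Set.univ α) S.ρ0) :=
  unwinding_relates_purged_general S pol sim hrefl hsymm htrans hstep hlocal
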